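/- For every integer n ≥ 4 and every real number v, the generating polynomial of the unsigned Matsunaga numbers satisfies P_n(v)/n! = Σ_{j=0}^{n−2} binom(v+n−j−1, n−j) · (−1)^j · β_{n−j}, where binom(v+m−1, m) = (v+m−1)(v+m−2)···v / m! denotes the generalized binomial coefficient (a polynomial in v). -/

import Mathlib

open Finset

/-- A set partition of `Fin n`: a finite family of nonempty blocks such that
every element lies in exactly one block. -/
def IsSetPartition {n : ℕ} (P : Finset (Finset (Fin n))) : Prop :=
  (∀ B ∈ P, B.Nonempty) ∧ ∀ x : Fin n, ∃! B, B ∈ P ∧ x ∈ B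

/-- The Bell number `B n`: the number of set partitions of an `n`-element set. -/
noncomputable def bell (n : ℕ) : ℕ :=
  Nat.card {P : Finset (Finset (Fin n)) // IsSetPartition P}

/-- `beta n`: the number of set partitions of an `n`-element set with no singleton blocks. -/
noncomputable def beta (n : ℕ) : ℕ :=
  Nat.card {P : Finset (Finset (Fin n)) // IsSetPartition P ∧ ∀ B ∈ P, 2 ≤ B.card}

/-- Signed Stirling numbers of the first kind, defined by
`∑ k, stirS n k * z ^ k = z (z-1) ⋯ (z-n+1)`. -/
def stirS : ℕ → ℕ → ℤ
  | 0, 0 => 1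
  | 0, _ + 1 => 0
  | _ + 1, 0 => 0
  | n + 1, k + 1 => stirS n k - (n : ℤ) * stirS n (k + 1)

/-- Unsigned Stirling numbers of the first kind (number of permutations of `n`
elements with `k` cycles). -/
def stirU : ℕ → ℕ → ℕ
  | 0, 0 => 1
  | 0, _ + 1 => 0
  | _ + 1, 0 => 0
  | n + 1, k + 1 => stirU n k + n * stirU n (k + 1)

/-- The Matsunaga numbers `M n k`, defined by the recurrence
`M n k = n * M (n-1) k + beta n * stirS n k` for `1 ≤ k ≤ n`, and `0` whenever
`n ≤ 1`, `k ≤ 0` or `k > n`. -/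
noncomputable def matsunaga : ℕ → ℕ → ℤ
  | 0, _ => 0
  | 1, _ => 0
  | n + 2, k =>
      if 1 ≤ k ∧ k ≤ n + 2 then
        ((n : ℤ) + 2) * matsunaga (n + 1) k + (beta (n + 2) : ℤ) * stirS (n + 2) k
      else 0

/-- The generalized binomial coefficient `binom (v + m - 1) m
= (v + m - 1)(v + m - 2) ⋯ v / m! = (∏_{i=0}^{m-1} (v + i)) / m!`,
a polynomial in `v`. -/
noncomputable def genBinom (v : ℝ) (m : ℕ) : ℝ :=
  (∏ i ∈ Finset.range m, (v + i)) / (m.factorial : ℝ)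

namespace SetPart

variable {n : ℕ}

lemma block_unique {P : Finset (Finset (Fin n))} (hP : IsSetPartition P)
    {B1 B2 : Finset (Fin n)} (h1 : B1 ∈ P) (h2 : B2 ∈ P) {x : Fin n}
    (hx1 : x ∈ B1) (hx2 : x ∈ B2) : B1 = B2 := by
  obtain ⟨B, _, hu⟩ := hP.2 x
  exact (hu B1 ⟨h1, hx1⟩).trans (hu B2 ⟨h2, hx2⟩).symm

lemma eq_singleton_univ {P : Finset (Finset (Fin n))} (hP : IsSetPartition P)
    (h : (univ : Finset (Fin n)) ∈ P) : P = {univ} := by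
  ext B
  simp only [mem_singleton]
  constructor
  · intro hB
    obtain ⟨x, hx⟩ := hP.1 B hB
    exact block_unique hP hB h hx (mem_univ x)
  · rintro rfl; exact h

/-! ### up/down -/

def up (B : Finset (Fin n)) : Finset (Fin (n+1)) :=
  B.map ⟨Fin.castSucc, Fin.castSucc_injective n⟩

def down (C : Finset (Fin (n+1))) : Finset (Fin n) :=
  univ.filter (fun y => Fin.castSucc y ∈ C)

lemma mem_up {B : Finset (Fin n)} {y : Fin n} : Fin.castSucc y ∈ up B ↔ y ∈ B := by
  constructor
  · intro h
    obtain ⟨a, ha, h2⟩ := Finset.mem_map.mp h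
    rwa [← Fin.castSucc_injective n h2]
  · intro h
    exact Finset.mem_map.mpr ⟨y, h, rfl⟩

lemma last_not_mem_up {B : Finset (Fin n)} : Fin.last n ∉ up B := by
  simp only [up, Finset.mem_map, Function.Embedding.coeFn_mk]
  rintro ⟨a, _, h⟩
  exact absurd h (Fin.ne_of_lt (Fin.castSucc_lt_last a))

lemma mem_up_iff {B : Finset (Fin n)} {x : Fin (n+1)} :
    x ∈ up B ↔ ∃ y ∈ B, Fin.castSucc y = x := by
  simp [up]

lemma down_up (B : Finset (Fin n)) : down (up B) = B := by
  ext y; simp [down, mem_up]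

lemma down_insert_last (C : Finset (Fin (n+1))) :
    down (insert (Fin.last n) C) = down C := by
  ext y
  simp only [down, mem_filter, mem_univ, true_and, Finset.mem_insert]
  have : Fin.castSucc y ≠ Fin.last n := Fin.ne_of_lt (Fin.castSucc_lt_last y)
  tauto

lemma card_up (B : Finset (Fin n)) : (up B).card = B.card := Finset.card_map _

lemma up_nonempty {B : Finset (Fin n)} (h : B.Nonempty) : (up B).Nonempty :=
  Finset.Nonempty.map h

/-! ### the insertion map -/

def insF (P : Finset (Finset (Fin n))) (y0 : Fin n) : Finset (Finset (Fin (n+1))) :=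
  P.image (fun B => if y0 ∈ B then insert (Fin.last n) (up B) else up B)

lemma insF_isPart {P : Finset (Finset (Fin n))} (hP : IsSetPartition P) (y0 : Fin n) :
    IsSetPartition (insF P y0) := by
  constructor
  · intro C hC
    obtain ⟨B, hB, rfl⟩ := Finset.mem_image.mp hC
    have hne := up_nonempty (hP.1 B hB)
    split
    · exact Finset.insert_nonempty _ _
    · exact hne
  · intro x
    rcases Fin.eq_castSucc_or_eq_last x with ⟨y, rfl⟩ | rfl
    · obtain ⟨B, ⟨hBP, hyB⟩, huniq⟩ := hP.2 y
      refine ⟨if y0 ∈ B then insert (Fin.last n) (up B) else up B,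
        ⟨Finset.mem_image_of_mem _ hBP, ?_⟩, ?_⟩
      · split
        · exact Finset.mem_insert_of_mem (mem_up.mpr hyB)
        · exact mem_up.mpr hyB
      · rintro C ⟨hC, hyC⟩
        obtain ⟨B', hB'P, rfl⟩ := Finset.mem_image.mp hC
        have hyB' : y ∈ B' := by
          by_cases h : y0 ∈ B'
          · rw [if_pos h] at hyC
            rcases Finset.mem_insert.mp hyC with h' | h'
            · exact absurd h' (Fin.ne_of_lt (Fin.castSucc_lt_last y))
            · exact mem_up.mp h'
          · rw [if_neg h] at hyC
            exact mem_up.mp hyC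
        rw [huniq B' ⟨hB'P, hyB'⟩]
    · obtain ⟨B, ⟨hBP, hyB⟩, huniq⟩ := hP.2 y0
      refine ⟨insert (Fin.last n) (up B), ⟨?_, Finset.mem_insert_self _ _⟩, ?_⟩
      · rw [show insert (Fin.last n) (up B) = if y0 ∈ B then insert (Fin.last n) (up B) else up B
          from (if_pos hyB).symm]
        exact Finset.mem_image_of_mem _ hBP
      · rintro C ⟨hC, hlC⟩
        obtain ⟨B', hB'P, rfl⟩ := Finset.mem_image.mp hC
        by_cases h : y0 ∈ B'
        · rw [if_pos h] at hlC ⊢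
          rw [huniq B' ⟨hB'P, h⟩]
        · rw [if_neg h] at hlC
          exact absurd hlC last_not_mem_up

lemma insF_card {P : Finset (Finset (Fin n))} (hc : ∀ B ∈ P, 2 ≤ B.card) (y0 : Fin n) :
    ∀ C ∈ insF P y0, 2 ≤ C.card := by
  intro C hC
  obtain ⟨B, hB, rfl⟩ := Finset.mem_image.mp hC
  have h2 := hc B hB
  split
  · calc 2 ≤ (up B).card := by rw [card_up]; exact h2
      _ ≤ (insert (Fin.last n) (up B)).card := Finset.card_le_card (Finset.subset_insert _ _)
  · rw [card_up]; exact h2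

lemma insF_down {P : Finset (Finset (Fin n))} (y0 : Fin n) :
    (insF P y0).image down = P := by
  rw [insF, Finset.image_image]
  have : ∀ B ∈ P, (down ∘ fun B => if y0 ∈ B then insert (Fin.last n) (up B) else up B) B = B := by
    intro B _
    simp only [Function.comp_apply]
    split
    · rw [down_insert_last, down_up]
    · rw [down_up]
  calc P.image _ = P.image id := Finset.image_congr (fun B hB => this B hB)
    _ = P := Finset.image_id

lemma insF_last_block {P : Finset (Finset (Fin n))} {y0 : Fin n} {C : Finset (Fin (n+1))}
    (hC : C ∈ insF P y0) (hl : Fin.last n ∈ C) :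
    ∃ B ∈ P, y0 ∈ B ∧ C = insert (Fin.last n) (up B) := by
  obtain ⟨B, hB, rfl⟩ := Finset.mem_image.mp hC
  by_cases h : y0 ∈ B
  · rw [if_pos h] at *
    exact ⟨B, hB, h, rfl⟩
  · rw [if_neg h] at hl
    exact absurd hl last_not_mem_up


lemma univ_partition (hn : 1 ≤ n) : IsSetPartition ({univ} : Finset (Finset (Fin n))) := by
  constructor
  · intro B hB
    rw [mem_singleton] at hB
    subst hB
    exact ⟨⟨0, by omega⟩, mem_univ _⟩
  · intro x
    exact ⟨univ, ⟨mem_singleton_self _, mem_univ x⟩, fun B hB => mem_singleton.mp hB.1⟩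

lemma part_small (h2 : 2 ≤ n) (h3 : n ≤ 3) {P : Finset (Finset (Fin n))}
    (hP : IsSetPartition P) (hc : ∀ B ∈ P, 2 ≤ B.card) : P = {univ} := by
  obtain ⟨B0, ⟨hB0P, hB00⟩, _⟩ := hP.2 ⟨0, by omega⟩
  have hB0 : B0 = univ := by
    by_contra hne
    have : ∃ x, x ∉ B0 := by
      by_contra h
      push_neg at h
      exact hne (Finset.eq_univ_iff_forall.mpr h)
    obtain ⟨x, hx⟩ := this
    obtain ⟨Bx, ⟨hBxP, hBxx⟩, _⟩ := hP.2 x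
    have hdisj : Disjoint B0 Bx := by
      rw [Finset.disjoint_left]
      intro a ha hax
      exact hx ((block_unique hP hBxP hB0P hax ha) ▸ hBxx)
    have hcard : B0.card + Bx.card ≤ n := by
      calc B0.card + Bx.card = (B0 ∪ Bx).card := (Finset.card_union_of_disjoint hdisj).symm
        _ ≤ (univ : Finset (Fin n)).card := Finset.card_le_card (subset_univ _)
        _ = n := by rw [Finset.card_univ, Fintype.card_fin]
    have := hc B0 hB0P
    have := hc Bx hBxP
    omega
  exact eq_singleton_univ hP (hB0 ▸ hB0P)

lemma beta_small (h2 : 2 ≤ n) (h3 : n ≤ 3) : beta n = 1 := by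
  have hd : IsSetPartition ({univ} : Finset (Finset (Fin n))) ∧
      ∀ B ∈ ({univ} : Finset (Finset (Fin n))), 2 ≤ B.card := by
    refine ⟨univ_partition (by omega), ?_⟩
    intro B hB
    rw [mem_singleton] at hB
    subst hB
    rw [Finset.card_univ, Fintype.card_fin]
    omega
  haveI : Unique {P : Finset (Finset (Fin n)) // IsSetPartition P ∧ ∀ B ∈ P, 2 ≤ B.card} := by
    refine ⟨⟨⟨{univ}, hd⟩⟩, ?_⟩
    rintro ⟨P, hP, hc⟩
    exact Subtype.ext (part_small h2 h3 hP hc)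
  exact Nat.card_unique

lemma beta_two : beta 2 = 1 := beta_small (by omega) (by omega)
lemma beta_three : beta 3 = 1 := beta_small (by omega) (by omega)

lemma beta_four : 2 ≤ beta 4 := by
  have h2p : IsSetPartition ({{0,1},{2,3}} : Finset (Finset (Fin 4))) := by
    show (∀ B ∈ ({{0,1},{2,3}} : Finset (Finset (Fin 4))), B.Nonempty) ∧
        ∀ x : Fin 4, ∃ B, (B ∈ ({{0,1},{2,3}} : Finset (Finset (Fin 4))) ∧ x ∈ B) ∧
          ∀ C, C ∈ ({{0,1},{2,3}} : Finset (Finset (Fin 4))) ∧ x ∈ C → C = B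
    decide
  have h1 : IsSetPartition ({univ} : Finset (Finset (Fin 4))) ∧
      ∀ B ∈ ({univ} : Finset (Finset (Fin 4))), 2 ≤ B.card :=
    ⟨univ_partition (by omega), by decide⟩
  have h2 : IsSetPartition ({{0,1},{2,3}} : Finset (Finset (Fin 4))) ∧
      ∀ B ∈ ({{0,1},{2,3}} : Finset (Finset (Fin 4))), 2 ≤ B.card :=
    ⟨h2p, by decide⟩
  have hne : ({univ} : Finset (Finset (Fin 4))) ≠ {{0,1},{2,3}} := by decide
  haveI : Nontrivial {P : Finset (Finset (Fin 4)) // IsSetPartition P ∧ ∀ B ∈ P, 2 ≤ B.card} :=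
    ⟨⟨⟨{univ}, h1⟩, ⟨{{0,1},{2,3}}, h2⟩, fun h => hne (congrArg Subtype.val h)⟩⟩
  rw [beta]
  exact Finite.one_lt_card_iff_nontrivial.mpr this

end SetPart

namespace SetPart

variable {n : ℕ}

/-! ### the split partition -/

def splitP (n : ℕ) : Finset (Finset (Fin (n+1))) :=
  {{0, Fin.last n}, ({0, Fin.last n} : Finset (Fin (n+1)))ᶜ}

lemma zero_ne_last (hn : 1 ≤ n) : (0 : Fin (n+1)) ≠ Fin.last n := by
  rw [Fin.ne_iff_vne]
  simp [Fin.last]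
  omega

lemma splitP_spec (hn : 3 ≤ n) :
    IsSetPartition (splitP n) ∧ ∀ B ∈ splitP n, 2 ≤ B.card := by
  set S : Finset (Fin (n+1)) := {0, Fin.last n} with hS
  have h0l : (0 : Fin (n+1)) ≠ Fin.last n := zero_ne_last (by omega)
  have hSc : S.card = 2 := by
    rw [hS, Finset.card_insert_of_notMem (by simp [h0l]), Finset.card_singleton]
  have hScc : Sᶜ.card = n - 1 := by
    rw [Finset.card_compl, hSc, Fintype.card_fin]
    omega
  have hmemS : ∀ x : Fin (n+1), x ∈ S ∨ x ∈ Sᶜ := by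
    intro x
    by_cases h : x ∈ S
    · exact Or.inl h
    · exact Or.inr (Finset.mem_compl.mpr h)
  constructor
  constructor
  · intro B hB
    rcases Finset.mem_insert.mp hB with rfl | hB
    · exact ⟨0, Finset.mem_insert_self _ _⟩
    · rw [Finset.mem_singleton] at hB
      subst hB
      rw [← Finset.card_pos, hScc]
      omega
  · intro x
    by_cases hx : x ∈ S
    · refine ⟨S, ⟨Finset.mem_insert_self _ _, hx⟩, ?_⟩
      rintro C ⟨hC, hxC⟩
      rcases Finset.mem_insert.mp hC with rfl | hC
      · rfl
      · rw [Finset.mem_singleton] at hC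
        subst hC
        exact absurd hx (Finset.mem_compl.mp hxC)
    · refine ⟨Sᶜ, ⟨Finset.mem_insert_of_mem (Finset.mem_singleton_self _),
        Finset.mem_compl.mpr hx⟩, ?_⟩
      rintro C ⟨hC, hxC⟩
      rcases Finset.mem_insert.mp hC with rfl | hC
      · exact absurd hxC hx
      · rw [Finset.mem_singleton] at hC
        subst hC
        rfl
  · intro B hB
    rcases Finset.mem_insert.mp hB with rfl | hB
    · exact le_of_eq hSc.symm
    · rw [Finset.mem_singleton] at hB
      subst hB
      have h2 : 2 ≤ Sᶜ.card := by rw [hScc]; omega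
      exact h2

lemma insF_ne_splitP (hn : 1 ≤ n) {P : Finset (Finset (Fin n))}
    (hc : ∀ B ∈ P, 2 ≤ B.card) (y0 : Fin n) : insF P y0 ≠ splitP n := by
  intro h
  have hS : ({0, Fin.last n} : Finset (Fin (n+1))) ∈ insF P y0 := by
    rw [h, splitP]
    exact Finset.mem_insert_self _ _
  have hl : Fin.last n ∈ ({0, Fin.last n} : Finset (Fin (n+1))) :=
    Finset.mem_insert_of_mem (Finset.mem_singleton_self _)
  obtain ⟨B, hB, _, hform⟩ := insF_last_block hS hl
  have hcard : ({0, Fin.last n} : Finset (Fin (n+1))).card = 2 := by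
    rw [Finset.card_insert_of_notMem (by simp [zero_ne_last hn]), Finset.card_singleton]
  have : ({0, Fin.last n} : Finset (Fin (n+1))).card = B.card + 1 := by
    rw [hform, Finset.card_insert_of_notMem last_not_mem_up, card_up]
  have := hc B hB
  omega

/-! ### anchors -/

noncomputable def blk (P : Finset (Finset (Fin n))) (x : Fin n) : Finset (Fin n) :=
  if h : ∃ B, B ∈ P ∧ x ∈ B then h.choose else ∅

lemma blk_mem {P : Finset (Finset (Fin n))} (hP : IsSetPartition P) (x : Fin n) :
    blk P x ∈ P ∧ x ∈ blk P x := by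
  have h : ∃ B, B ∈ P ∧ x ∈ B := (hP.2 x).exists
  rw [blk, dif_pos h]
  exact h.choose_spec

noncomputable def anc [NeZero n] (P : Finset (Finset (Fin n))) : Fin n :=
  if h : ((blk P 0)ᶜ : Finset (Fin n)).Nonempty then (blk P 0)ᶜ.min' h else 0

lemma anc_not_mem [NeZero n] {P : Finset (Finset (Fin n))} (hP : IsSetPartition P)
    (hne : P ≠ {univ}) : anc P ∉ blk P 0 := by
  have hBu : blk P 0 ≠ univ := fun h => hne (eq_singleton_univ hP (h ▸ (blk_mem hP 0).1))
  have hcne : ((blk P 0)ᶜ : Finset (Fin n)).Nonempty := by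
    obtain ⟨x, hx⟩ : ∃ x, x ∉ blk P 0 := by
      by_contra h
      push_neg at h
      exact hBu (Finset.eq_univ_iff_forall.mpr h)
    exact ⟨x, Finset.mem_compl.mpr hx⟩
  rw [anc, dif_pos hcne]
  exact Finset.mem_compl.mp (Finset.min'_mem _ hcne)

lemma false_true_clash [NeZero n] {P : Finset (Finset (Fin n))} (hP : IsSetPartition P)
    (hne : P ≠ {univ}) : insF P 0 ≠ insF P (anc P) := by
  intro h
  obtain ⟨C, ⟨hC, hlC⟩, _⟩ := (insF_isPart hP (0 : Fin n)).2 (Fin.last n)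
  obtain ⟨B1, hB1, h0B1, hf1⟩ := insF_last_block hC hlC
  obtain ⟨B2, hB2, hancB2, hf2⟩ := insF_last_block (h ▸ hC) hlC
  have hBB : B1 = B2 := by
    have : insert (Fin.last n) (up B1) = insert (Fin.last n) (up B2) := hf1 ▸ hf2 ▸ rfl
    have h2 : up B1 = up B2 := by
      have e1 : (insert (Fin.last n) (up B1)).erase (Fin.last n) = up B1 :=
        Finset.erase_insert last_not_mem_up
      have e2 : (insert (Fin.last n) (up B2)).erase (Fin.last n) = up B2 :=
        Finset.erase_insert last_not_mem_up
      rw [← e1, ← e2, this]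
    have := congrArg down h2
    rwa [down_up, down_up] at this
  subst hBB
  have : B1 = blk P 0 := block_unique hP hB1 (blk_mem hP 0).1 h0B1 (blk_mem hP 0).2
  exact anc_not_mem hP hne (this ▸ hancB2)

end SetPart

namespace SetPart

noncomputable def FF (n : ℕ) (hn : 4 ≤ n) :
    Bool × {P : Finset (Finset (Fin n)) // IsSetPartition P ∧ ∀ B ∈ P, 2 ≤ B.card} →
    {Q : Finset (Finset (Fin (n+1))) // IsSetPartition Q ∧ ∀ B ∈ Q, 2 ≤ B.card} := fun p =>
  haveI : NeZero n := ⟨by omega⟩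
  if p.1 = true then
    (if hu : p.2.val = {univ} then ⟨splitP n, splitP_spec (by omega)⟩
     else ⟨insF p.2.val (anc p.2.val), insF_isPart p.2.2.1 _, insF_card p.2.2.2 _⟩)
  else ⟨insF p.2.val 0, insF_isPart p.2.2.1 _, insF_card p.2.2.2 _⟩

set_option maxHeartbeats 1000000 in
lemma FF_inj (n : ℕ) (hn : 4 ≤ n) : Function.Injective (FF n hn) := by
  haveI : NeZero n := ⟨by omega⟩
  rintro ⟨b, P⟩ ⟨b', P'⟩ h
  have hval := congrArg Subtype.val h
  have recov : ∀ (Q : Finset (Finset (Fin n))) (y0 : Fin n) (Q' : Finset (Finset (Fin n)))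
      (y0' : Fin n), insF Q y0 = insF Q' y0' → Q = Q' := by
    intro Q y0 Q' y0' he
    have := congrArg (Finset.image down) he
    rwa [insF_down, insF_down] at this
  cases b <;> cases b'
  · -- false false
    simp only [FF, reduceIte] at hval
    have : P = P' := Subtype.ext (recov _ _ _ _ hval)
    rw [this]
  · -- false true
    exfalso
    by_cases hu : P'.val = {univ}
    · simp only [FF, reduceIte, dif_pos hu] at hval
      exact insF_ne_splitP (by omega) P.2.2 0 hval
    · simp only [FF, reduceIte, dif_neg hu] at hval
      have hPP : P.val = P'.val := recov _ _ _ _ hval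
      rw [← hPP] at hval hu
      exact false_true_clash P.2.1 hu hval
  · -- true false
    exfalso
    by_cases hu : P.val = {univ}
    · simp only [FF, reduceIte, dif_pos hu] at hval
      exact insF_ne_splitP (by omega) P'.2.2 0 hval.symm
    · simp only [FF, reduceIte, dif_neg hu] at hval
      have hPP : P'.val = P.val := recov _ _ _ _ hval.symm
      rw [← hPP] at hval hu
      exact false_true_clash P'.2.1 hu hval.symm
  · -- true true
    by_cases hu : P.val = {univ} <;> by_cases hu' : P'.val = {univ}
    · rw [Prod.ext_iff]
      exact ⟨rfl, Subtype.ext (hu.trans hu'.symm)⟩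
    · exfalso
      simp only [FF, reduceIte, dif_pos hu, dif_neg hu'] at hval
      exact insF_ne_splitP (by omega) P'.2.2 _ hval.symm
    · exfalso
      simp only [FF, reduceIte, dif_pos hu', dif_neg hu] at hval
      exact insF_ne_splitP (by omega) P.2.2 _ hval
    · simp only [FF, reduceIte, dif_neg hu, dif_neg hu'] at hval
      have : P = P' := Subtype.ext (recov _ _ _ _ hval)
      rw [this]

lemma beta_step (n : ℕ) (hn : 4 ≤ n) : 2 * beta n ≤ beta (n+1) := by
  have h1 : (2 : ℕ) = Nat.card Bool := by
    rw [Nat.card_eq_fintype_card, Fintype.card_bool]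
  calc 2 * beta n = Nat.card Bool * Nat.card
        {P : Finset (Finset (Fin n)) // IsSetPartition P ∧ ∀ B ∈ P, 2 ≤ B.card} := by
          rw [← h1, beta]
    _ = Nat.card (Bool × {P : Finset (Finset (Fin n)) //
          IsSetPartition P ∧ ∀ B ∈ P, 2 ≤ B.card}) := (Nat.card_prod _ _).symm
    _ ≤ Nat.card {Q : Finset (Finset (Fin (n+1))) //
          IsSetPartition Q ∧ ∀ B ∈ Q, 2 ≤ B.card} :=
        Nat.card_le_card_of_injective (FF n hn) (FF_inj n hn)
    _ = beta (n+1) := rfl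

end SetPart


lemma stirS_eq (m : ℕ) : ∀ k, stirS m k = (-1)^(m+k) * stirU m k := by
  induction m with
  | zero => intro k; cases k <;> simp [stirS, stirU]
  | succ n ih =>
    intro k
    cases k with
    | zero => simp [stirS, stirU]
    | succ k =>
      rw [stirS, stirU, ih k, ih (k+1)]
      push_cast
      ring

lemma stirU_zero_mul (m : ℕ) : m * stirU m 0 = 0 := by
  cases m <;> simp [stirU]

lemma stirU_eq_zero_of_lt : ∀ m k, m < k → stirU m k = 0 := by
  intro m
  induction m with
  | zero => intro k hk; cases k; omega; simp [stirU]
  | succ n ih =>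
    intro k hk
    cases k with
    | zero => omega
    | succ k => rw [stirU, ih k (by omega), ih (k+1) (by omega)]; ring

lemma prod_eq_sum_stirU (m : ℕ) (v : ℝ) :
    ∏ i ∈ range m, (v + i) = ∑ k ∈ range (m+1), (stirU m k : ℝ) * v^k := by
  induction m with
  | zero => simp [stirU]
  | succ n ih =>
    have key : ∀ k, (stirU (n+1) (k+1) : ℝ) = stirU n k + n * stirU n (k+1) := by
      intro k; rw [stirU]; push_cast; ring
    have h0 : (stirU (n+1) 0 : ℝ) = 0 := by cases n <;> simp [stirU]
    have hn0 : (n : ℝ) * (stirU n 0 : ℝ) = 0 := by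
      exact_mod_cast congrArg (Nat.cast : ℕ → ℝ) (stirU_zero_mul n)
    have hshift : ∑ k ∈ range (n+1), ((stirU n (k+1) : ℝ)) * v^(k+1)
        = ∑ k ∈ range (n+1), (stirU n k : ℝ) * v^k - (stirU n 0 : ℝ) := by
      rw [show ∑ k ∈ range (n+1), ((stirU n (k+1) : ℝ)) * v^(k+1)
          = ∑ k ∈ range (n+1+1), (stirU n k : ℝ) * v^k - (stirU n 0 : ℝ) * v^0 by
        rw [Finset.sum_range_succ' (fun k => (stirU n k : ℝ) * v^k) (n+1)]; ring]
      rw [Finset.sum_range_succ, stirU_eq_zero_of_lt n (n+1) (by omega)]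
      simp
    calc ∏ i ∈ range (n+1), (v + i)
        = (∑ k ∈ range (n+1), (stirU n k : ℝ) * v^k) * (v + n) := by
          rw [prod_range_succ, ih]
      _ = ∑ k ∈ range (n+1), (stirU n k : ℝ) * v^(k+1)
          + (n:ℝ) * ∑ k ∈ range (n+1), (stirU n k : ℝ) * v^k := by
          rw [Finset.sum_mul, Finset.mul_sum, ← Finset.sum_add_distrib]
          apply Finset.sum_congr rfl; intro k _; ring
      _ = ∑ k ∈ range (n+1), (stirU n k : ℝ) * v^(k+1)
          + (n:ℝ) * (∑ k ∈ range (n+1), ((stirU n (k+1) : ℝ)) * v^(k+1) + (stirU n 0 : ℝ)) := by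
          rw [hshift]; ring
      _ = ∑ k ∈ range (n+1), ((stirU n k : ℝ) + n * stirU n (k+1)) * v^(k+1) := by
          rw [mul_add, hn0, add_zero, Finset.mul_sum, ← Finset.sum_add_distrib]
          apply Finset.sum_congr rfl; intro k _; ring
      _ = ∑ k ∈ range (n+1), (stirU (n+1) (k+1) : ℝ) * v^(k+1) := by
          apply Finset.sum_congr rfl; intro k _; rw [key]
      _ = ∑ k ∈ range (n+1+1), (stirU (n+1) k : ℝ) * v^k := by
          rw [Finset.sum_range_succ' (fun k => (stirU (n+1) k : ℝ) * v^k) (n+1), h0]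
          simp

/-! ### matsunaga basics -/

lemma matsunaga_rec (n k : ℕ) (h1 : 1 ≤ k) (h2 : k ≤ n+2) :
    matsunaga (n+2) k = ((n:ℤ)+2) * matsunaga (n+1) k + (beta (n+2) : ℤ) * stirS (n+2) k := by
  rw [matsunaga, if_pos ⟨h1, h2⟩]

lemma matsunaga_not (n k : ℕ) (h : ¬(1 ≤ k ∧ k ≤ n+2)) : matsunaga (n+2) k = 0 := by
  rw [matsunaga, if_neg h]

lemma matsunaga_one (k : ℕ) : matsunaga 1 k = 0 := rfl

lemma matsunaga_gt (n k : ℕ) (h : n < k) : matsunaga n k = 0 := by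
  match n with
  | 0 => rfl
  | 1 => rfl
  | m+2 => exact matsunaga_not m k (by omega)

/-! ### positivity -/


lemma matsunaga_sign (n : ℕ) (hn : 4 ≤ n) : ∀ k : ℕ,
    0 ≤ (-1:ℤ)^(n+k) * matsunaga n k ∧
    2 * ((-1:ℤ)^(n+k) * matsunaga n k) ≤ 3 * (beta n : ℤ) * (stirU n k : ℤ) := by
  induction n, hn using Nat.le_induction with
  | base =>
    have h21 : matsunaga 2 1 = -1 := by
      rw [show (2:ℕ) = 0+2 from rfl, matsunaga_rec 0 1 (by omega) (by omega)]
      rw [matsunaga_one, SetPart.beta_two]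
      norm_num [show stirS 2 1 = -1 from by decide]
    have h22 : matsunaga 2 2 = 1 := by
      rw [show (2:ℕ) = 0+2 from rfl, matsunaga_rec 0 2 (by omega) (by omega)]
      rw [matsunaga_one, SetPart.beta_two]
      norm_num [show stirS 2 2 = 1 from by decide]
    have h31 : matsunaga 3 1 = -1 := by
      rw [show (3:ℕ) = 1+2 from rfl, matsunaga_rec 1 1 (by omega) (by omega), h21, SetPart.beta_three]
      norm_num [show stirS 3 1 = 2 from by decide]
    have h32 : matsunaga 3 2 = 0 := by
      rw [show (3:ℕ) = 1+2 from rfl, matsunaga_rec 1 2 (by omega) (by omega), h22, SetPart.beta_three]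
      norm_num [show stirS 3 2 = -3 from by decide]
    have h33 : matsunaga 3 3 = 1 := by
      rw [show (3:ℕ) = 1+2 from rfl, matsunaga_rec 1 3 (by omega) (by omega),
        matsunaga_gt 2 3 (by omega), SetPart.beta_three]
      norm_num [show stirS 3 3 = 1 from by decide]
    set b : ℤ := (beta 4 : ℤ) with hbdef
    have hb : (2:ℤ) ≤ b := by rw [hbdef]; exact_mod_cast SetPart.beta_four
    intro k
    match k with
    | 0 =>
      rw [show matsunaga 4 0 = 0 from matsunaga_not 2 0 (by omega)]
      refine ⟨by simp, ?_⟩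
      have h30 : (0:ℤ) ≤ 3 * (beta 4 : ℤ) * (stirU 4 0 : ℤ) := by positivity
      simpa using h30
    | 1 =>
      rw [show (4:ℕ) = 2+2 from rfl, matsunaga_rec 2 1 (by omega) (by omega), h31]
      rw [show stirS 4 1 = -6 from by decide, show stirU 4 1 = 6 from by decide]
      push_cast
      constructor <;> [nlinarith; nlinarith]
    | 2 =>
      rw [show (4:ℕ) = 2+2 from rfl, matsunaga_rec 2 2 (by omega) (by omega), h32]
      rw [show stirS 4 2 = 11 from by decide, show stirU 4 2 = 11 from by decide]
      push_cast
      constructor <;> [nlinarith; nlinarith]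
    | 3 =>
      rw [show (4:ℕ) = 2+2 from rfl, matsunaga_rec 2 3 (by omega) (by omega), h33]
      rw [show stirS 4 3 = -6 from by decide, show stirU 4 3 = 6 from by decide]
      push_cast
      constructor <;> [nlinarith; nlinarith]
    | 4 =>
      rw [show (4:ℕ) = 2+2 from rfl, matsunaga_rec 2 4 (by omega) (by omega),
        matsunaga_gt 3 4 (by omega)]
      rw [show stirS 4 4 = 1 from by decide, show stirU 4 4 = 1 from by decide]
      push_cast
      constructor <;> [nlinarith; nlinarith]
    | (m+5) =>
      rw [show matsunaga 4 (m+5) = 0 from matsunaga_not 2 (m+5) (by omega)]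
      refine ⟨by simp, ?_⟩
      have h30 : (0:ℤ) ≤ 3 * (beta 4 : ℤ) * (stirU 4 (m+5) : ℤ) := by positivity
      simpa using h30
  | succ n hn4 ih =>
    intro k
    by_cases hk : 1 ≤ k ∧ k ≤ n+1
    · obtain ⟨m, rfl⟩ : ∃ m, n = m + 1 := ⟨n-1, by omega⟩
      obtain ⟨j, rfl⟩ : ∃ j, k = j + 1 := ⟨k-1, by omega⟩
      set nn : ℕ := m + 1 with hnn
      have hrec : matsunaga (nn+1) (j+1) = ((nn:ℤ)+1) * matsunaga nn (j+1)
          + (beta (nn+1) : ℤ) * stirS (nn+1) (j+1) := by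
        rw [show nn + 1 = m + 2 from rfl, matsunaga_rec m (j+1) (by omega) (by omega)]
        push_cast [hnn]
        ring_nf
      obtain ⟨ih1, ih2⟩ := ih (j+1)
      set A : ℤ := (-1)^(nn+(j+1)) * matsunaga nn (j+1) with hA
      have hMA : matsunaga nn (j+1) = (-1)^(nn+(j+1)) * A := by
        rw [hA, ← mul_assoc, ← pow_add]
        rw [Even.neg_one_pow ⟨nn+(j+1), by ring⟩, one_mul]
      have hstir : ((-1:ℤ))^(nn+1+(j+1)) * stirS (nn+1) (j+1) = (stirU (nn+1) (j+1) : ℤ) := by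
        rw [stirS_eq, ← mul_assoc, ← pow_add]
        rw [Even.neg_one_pow ⟨nn+1+(j+1), by ring⟩, one_mul]
      have hsgn : ((-1:ℤ))^(nn+1+(j+1)) * (-1)^(nn+(j+1)) = -1 := by
        rw [← pow_add]
        have : nn+1+(j+1) + (nn+(j+1)) = 2*(nn+j+1) + 1 := by ring
        rw [this, pow_succ, Even.neg_one_pow ⟨nn+j+1, by ring⟩, one_mul]
    -- main rewriting
      have key : (-1:ℤ)^(nn+1+(j+1)) * matsunaga (nn+1) (j+1)
          = -((nn:ℤ)+1) * A + (beta (nn+1) : ℤ) * (stirU (nn+1) (j+1) : ℤ) := by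
        rw [hrec, mul_add, hMA]
        rw [show ((-1:ℤ))^(nn+1+(j+1)) * (((nn:ℤ)+1) * ((-1)^(nn+(j+1)) * A))
            = (((-1:ℤ))^(nn+1+(j+1)) * (-1)^(nn+(j+1))) * (((nn:ℤ)+1) * A) from by ring, hsgn]
        rw [show ((-1:ℤ))^(nn+1+(j+1)) * ((beta (nn+1) : ℤ) * stirS (nn+1) (j+1))
            = (beta (nn+1) : ℤ) * (((-1:ℤ))^(nn+1+(j+1)) * stirS (nn+1) (j+1)) from by ring, hstir]
        ring
      rw [key]
      -- inequalities
      have hx : (0:ℤ) ≤ (stirU nn (j+1) : ℤ) := by positivity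
      have hy : (0:ℤ) ≤ (stirU (nn+1) (j+1) : ℤ) := by positivity
      have hc : (0:ℤ) ≤ (beta nn : ℤ) := by positivity
      have hd0 : (0:ℤ) ≤ (beta (nn+1) : ℤ) := by positivity
      have hd : 2 * (beta nn : ℤ) ≤ (beta (nn+1) : ℤ) := by
        exact_mod_cast SetPart.beta_step nn hn4
      have hyx : (nn:ℤ) * (stirU nn (j+1) : ℤ) ≤ (stirU (nn+1) (j+1) : ℤ) := by
        have : stirU (nn+1) (j+1) = stirU nn j + nn * stirU nn (j+1) := by rw [stirU]
        rw [this]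
        push_cast
        have : (0:ℤ) ≤ (stirU nn j : ℤ) := by positivity
        linarith
      have hnn4 : (4:ℤ) ≤ (nn:ℤ) := by exact_mod_cast hn4
      constructor
      · -- 0 ≤ -(nn+1)A + d*y
        have e1 : ((nn:ℤ)+1) * (2*A) ≤ ((nn:ℤ)+1) * (3*(beta nn:ℤ)*(stirU nn (j+1):ℤ)) :=
          mul_le_mul_of_nonneg_left ih2 (by linarith)
        have e3 : (3*((nn:ℤ)+1)) * ((beta nn:ℤ)*(stirU nn (j+1):ℤ))
            ≤ (4*(nn:ℤ)) * ((beta nn:ℤ)*(stirU nn (j+1):ℤ)) :=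
          mul_le_mul_of_nonneg_right (by linarith) (mul_nonneg hc hx)
        have e4 : (2*(beta nn:ℤ))*((nn:ℤ)*(stirU nn (j+1):ℤ))
            ≤ (beta (nn+1):ℤ)*((nn:ℤ)*(stirU nn (j+1):ℤ)) :=
          mul_le_mul_of_nonneg_right hd (by positivity)
        have e5 : (beta (nn+1):ℤ)*((nn:ℤ)*(stirU nn (j+1):ℤ))
            ≤ (beta (nn+1):ℤ)*(stirU (nn+1) (j+1):ℤ) :=
          mul_le_mul_of_nonneg_left hyx hd0
        nlinarith [e1, e3, e4, e5]
      · have f1 : (0:ℤ) ≤ ((nn:ℤ)+1) * A := mul_nonneg (by linarith) ih1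
        have f2 : (0:ℤ) ≤ (beta (nn+1):ℤ)*(stirU (nn+1) (j+1):ℤ) := mul_nonneg hd0 hy
        nlinarith [f1, f2]
    · rw [show matsunaga (n+1) k = 0 from by
        obtain ⟨m, rfl⟩ : ∃ m, n = m + 1 := ⟨n-1, by omega⟩
        exact matsunaga_not m k (by omega)]
      refine ⟨by simp, ?_⟩
      have h30 : (0:ℤ) ≤ 3 * (beta (n+1) : ℤ) * (stirU (n+1) k : ℤ) := by positivity
      simpa only [mul_zero] using h30

lemma neg_pow_succ_r (n k : ℕ) : ((-1:ℝ))^(n+1+k) = -((-1:ℝ))^(n+k) := by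
  rw [show n+1+k = (n+k)+1 from by ring, pow_succ]; ring

lemma stir_flip (n k : ℕ) : ((-1:ℝ))^(n+k) * (stirS n k : ℝ) = (stirU n k : ℝ) := by
  have h2 : (stirS n k : ℝ) = (-1)^(n+k) * (stirU n k : ℝ) := by
    exact_mod_cast congrArg (Int.cast : ℤ → ℝ) (stirS_eq n k)
  rw [h2, ← mul_assoc, ← pow_add, Even.neg_one_pow ⟨n+k, by ring⟩, one_mul]

lemma genBinom_factorial (v : ℝ) (m : ℕ) :
    (m.factorial : ℝ) * genBinom v m = ∏ i ∈ range m, (v + i) := by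
  rw [genBinom, mul_div_cancel₀]
  exact_mod_cast m.factorial_ne_zero

lemma matsunaga_sum (n : ℕ) (hn : 2 ≤ n) (v : ℝ) :
    ∑ k ∈ Icc 1 n, (-1:ℝ)^(n+k) * (matsunaga n k : ℝ) * v^k
      = (n.factorial : ℝ) * ∑ m ∈ Icc 2 n, (-1:ℝ)^(n+m) * (beta m : ℝ) * genBinom v m := by
  induction n, hn using Nat.le_induction with
  | base =>
    have h21 : matsunaga 2 1 = -(beta 2 : ℤ) := by
      rw [show (2:ℕ) = 0+2 from rfl, matsunaga_rec 0 1 (by omega) (by omega), matsunaga_one]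
      rw [show stirS 2 1 = -1 from by decide]; ring
    have h22 : matsunaga 2 2 = (beta 2 : ℤ) := by
      rw [show (2:ℕ) = 0+2 from rfl, matsunaga_rec 0 2 (by omega) (by omega), matsunaga_one]
      rw [show stirS 2 2 = 1 from by decide]; ring
    rw [show Icc 1 2 = {1, 2} from by decide, show Icc 2 2 = {2} from by decide]
    rw [Finset.sum_pair (by norm_num : (1:ℕ) ≠ 2), Finset.sum_singleton]
    rw [h21, h22]
    simp only [genBinom, Finset.prod_range_succ, Finset.prod_range_zero, one_mul, Nat.factorial]
    push_cast
    norm_num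
    ring
  | succ n hn2 ih =>
    obtain ⟨m, rfl⟩ : ∃ m, n = m + 1 := ⟨n-1, by omega⟩
    set nn : ℕ := m + 1 with hnn
    have hfac : ((nn+1).factorial : ℝ) = ((nn:ℝ)+1) * (nn.factorial : ℝ) := by
      rw [Nat.factorial_succ]; push_cast; ring
    have step1 : ∑ k ∈ Icc 1 (nn+1), (-1:ℝ)^(nn+1+k) * (matsunaga (nn+1) k : ℝ) * v^k
        = ∑ k ∈ Icc 1 (nn+1), (-(((nn:ℝ)+1) * ((-1:ℝ)^(nn+k) * (matsunaga nn k : ℝ) * v^k))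
            + (beta (nn+1) : ℝ) * ((stirU (nn+1) k : ℝ) * v^k)) := by
      apply Finset.sum_congr rfl
      intro k hk
      simp only [Finset.mem_Icc] at hk
      have hrec : (matsunaga (nn+1) k : ℝ)
          = ((nn:ℝ)+1) * (matsunaga nn k : ℝ) + (beta (nn+1) : ℝ) * (stirS (nn+1) k : ℝ) := by
        rw [show nn + 1 = m + 2 from rfl, matsunaga_rec m k (by omega) (by omega)]
        push_cast [hnn]
        ring
      have hflip : ((-1:ℝ))^(nn+1+k) = -((-1:ℝ))^(nn+k) := neg_pow_succ_r nn k
      have hsf2 : -((-1:ℝ))^(nn+k) * (stirS (nn+1) k : ℝ) = (stirU (nn+1) k : ℝ) := by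
        rw [← hflip]; exact stir_flip (nn+1) k
      rw [hrec, hflip]
      linear_combination ((beta (nn+1) : ℝ) * v^k) * hsf2
    have step2 : ∑ k ∈ Icc 1 (nn+1), (-1:ℝ)^(nn+k) * (matsunaga nn k : ℝ) * v^k
        = ∑ k ∈ Icc 1 nn, (-1:ℝ)^(nn+k) * (matsunaga nn k : ℝ) * v^k := by
      rw [show Icc 1 (nn+1) = insert (nn+1) (Icc 1 nn) from by ext x; simp; omega]
      rw [Finset.sum_insert (by simp)]
      rw [matsunaga_gt nn (nn+1) (by omega)]
      simp
    have step3 : ∑ k ∈ Icc 1 (nn+1), (stirU (nn+1) k : ℝ) * v^k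
        = ((nn+1).factorial : ℝ) * genBinom v (nn+1) := by
      rw [genBinom_factorial, prod_eq_sum_stirU]
      rw [show range (nn+1+1) = insert 0 (Icc 1 (nn+1)) from by ext x; simp; omega]
      rw [Finset.sum_insert (by simp)]
      have : (stirU (nn+1) 0 : ℝ) = 0 := by rw [show stirU (nn+1) 0 = 0 from rfl]; simp
      rw [this]; ring
    rw [step1, Finset.sum_add_distrib, ← Finset.mul_sum]
    have hS1 : ∑ x ∈ Icc 1 (nn+1), -(((nn:ℝ)+1) * ((-1:ℝ)^(nn+x) * (matsunaga nn x : ℝ) * v^x))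
        = -(((nn:ℝ)+1) * ∑ x ∈ Icc 1 nn, (-1:ℝ)^(nn+x) * (matsunaga nn x : ℝ) * v^x) := by
      rw [Finset.sum_neg_distrib, ← Finset.mul_sum, step2]
    rw [hS1, step2] at *
    rw [step3, ih, hfac]
    rw [show Icc 2 (nn+1) = insert (nn+1) (Icc 2 nn) from by ext x; simp; omega]
    rw [Finset.sum_insert (by simp)]
    have hone : ((-1:ℝ))^(nn+1+(nn+1)) = 1 := Even.neg_one_pow ⟨nn+1, by ring⟩
    have hS2 : ∑ mm ∈ Icc 2 nn, (-1:ℝ)^(nn+1+mm) * (beta mm : ℝ) * genBinom v mm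
        = -∑ mm ∈ Icc 2 nn, (-1:ℝ)^(nn+mm) * (beta mm : ℝ) * genBinom v mm := by
      rw [← Finset.sum_neg_distrib]
      apply Finset.sum_congr rfl
      intro mm _
      rw [neg_pow_succ_r]; ring
    rw [hone, hS2]
    ring


/-- For `n ≥ 4` and every real `v`, with `P n v = ∑_{k=1}^{n} |M n k| * v^k`:
`P n v / n! = ∑_{j=0}^{n-2} binom (v + n - j - 1) (n - j) * (-1)^j * beta (n - j)`. -/
theorem matsunaga_generating_polynomial (n : ℕ) (hn : 4 ≤ n) (v : ℝ) :
    (∑ k ∈ Finset.Icc 1 n, |(matsunaga n k : ℝ)| * v ^ k) / (n.factorial : ℝ) =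
      ∑ j ∈ Finset.range (n - 1),
        genBinom v (n - j) * (-1 : ℝ) ^ j * (beta (n - j) : ℝ) := by
  have habs : ∀ k, |(matsunaga n k : ℝ)| = (-1:ℝ)^(n+k) * (matsunaga n k : ℝ) := by
    intro k
    have h := (matsunaga_sign n hn k).1
    have h' : (0:ℝ) ≤ (-1:ℝ)^(n+k) * (matsunaga n k : ℝ) := by exact_mod_cast h
    calc |(matsunaga n k : ℝ)| = |(-1:ℝ)^(n+k) * (matsunaga n k : ℝ)| := by
          rw [abs_mul, abs_pow, abs_neg, abs_one, one_pow, one_mul]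
      _ = (-1:ℝ)^(n+k) * (matsunaga n k : ℝ) := abs_of_nonneg h'
  have hsum : ∑ k ∈ Finset.Icc 1 n, |(matsunaga n k : ℝ)| * v ^ k
      = ∑ k ∈ Finset.Icc 1 n, (-1:ℝ)^(n+k) * (matsunaga n k : ℝ) * v ^ k := by
    apply Finset.sum_congr rfl
    intro k _
    rw [habs k]
  rw [hsum, matsunaga_sum n (by omega) v]
  rw [mul_div_cancel_left₀ _ (show (n.factorial:ℝ) ≠ 0 from by exact_mod_cast n.factorial_ne_zero)]
  apply Finset.sum_nbij' (i := fun m => n - m) (j := fun j => n - j)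
  · intro m hm
    simp only [Finset.mem_Icc] at hm
    simp only [Finset.mem_range]
    omega
  · intro j hj
    simp only [Finset.mem_range] at hj
    simp only [Finset.mem_Icc]
    omega
  · intro m hm
    simp only [Finset.mem_Icc] at hm
    omega
  · intro j hj
    simp only [Finset.mem_range] at hj
    omega
  · intro m hm
    simp only [Finset.mem_Icc] at hm
    rw [show n - (n - m) = m from by omega]
    rw [show ((-1:ℝ))^(n+m) = ((-1:ℝ))^(n-m) from by
      rw [show n+m = (n-m)+2*m from by omega, pow_add, pow_mul]; norm_num]
    ring
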